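/- arXiv:1607.07516 — 2 statements merged into one kernel-verified Lean document; each statement's English description precedes it below -/
import Mathlib

section
/- For every n ∈ ℕ and every ε ∈ [0, 1/2), every private-coin SMP protocol Π computing the equality function EQ_n with worst-case error at most ε satisfies CC_priv(Π) = ⌈log₂|M_A|⌉ + ⌈log₂|M_B|⌉ ≥ 2·√(g₃(ε))·√n − g₃(ε) − 6, where g₃(x) = 2·(1/2 − x)²·log₂ e. -/
open scoped BigOperators
open scoped Classical

noncomputable section

/-- A probability distribution on a finite type. -/
structure FinDist (Ω : Type) [Fintype Ω] where
  prob : Ω → ℝ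
  nonneg : ∀ ω, 0 ≤ prob ω
  sum_one : ∑ ω, prob ω = 1

namespace FinDist

variable {Ω Ω' : Type} [Fintype Ω] [Fintype Ω']

/-- Product of two distributions (independent draw). -/
def prod (p : FinDist Ω) (q : FinDist Ω') : FinDist (Ω × Ω') where
  prob := fun ω => p.prob ω.1 * q.prob ω.2
  nonneg := fun ω => mul_nonneg (p.nonneg _) (q.nonneg _)
  sum_one := by
    rw [Fintype.sum_prod_type]
    have h : ∀ a : Ω, ∑ b : Ω', p.prob a * q.prob b = p.prob a := by
      intro a; rw [← Finset.mul_sum, q.sum_one, mul_one]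
    simp_rw [h]
    exact p.sum_one

/-- Probability of an event. -/
def probEvent (p : FinDist Ω) (E : Ω → Prop) : ℝ :=
  ∑ ω, if E ω then p.prob ω else 0

/-- Probability that a random variable takes a given value. -/
def probVal {α : Type*} (p : FinDist Ω) (A : Ω → α) (a : α) : ℝ :=
  probEvent p (fun ω => A ω = a)

/-- Shannon entropy (in bits) of a random variable on a finite probability space. -/
def entropy {α : Type*} (p : FinDist Ω) (A : Ω → α) : ℝ :=
  ∑ a ∈ Finset.univ.image A, -(probVal p A a * Real.logb 2 (probVal p A a))

/-- Mutual information (in bits) I(A;B). -/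
def mutualInfo {α β : Type*} (p : FinDist Ω) (A : Ω → α) (B : Ω → β) : ℝ :=
  entropy p A + entropy p B - entropy p (fun ω => (A ω, B ω))

/-- Conditional mutual information (in bits) I(A;B|C). -/
def condMutualInfo {α β γ : Type*} (p : FinDist Ω) (A : Ω → α) (B : Ω → β) (C : Ω → γ) : ℝ :=
  entropy p (fun ω => (A ω, C ω)) + entropy p (fun ω => (B ω, C ω))
    - entropy p (fun ω => (A ω, B ω, C ω)) - entropy p C

/-- Independence of two random variables. -/
def Indep {α β : Type*} (p : FinDist Ω) (A : Ω → α) (B : Ω → β) : Prop :=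
  ∀ a b, probEvent p (fun ω => A ω = a ∧ B ω = b) = probVal p A a * probVal p B b

end FinDist

/-- log₂(e). -/
def log2e : ℝ := Real.logb 2 (Real.exp 1)

def g1 (x : ℝ) : ℝ := 2 * Real.logb 2 (x + 1) + 10

def g2 (x y z : ℝ) : ℝ := 2 * Real.logb 2 (2 * (x + y) / (z ^ 2 * log2e) + 1) + 2

def g3 (x : ℝ) : ℝ := 2 * (1 / 2 - x) ^ 2 * log2e

/-- A private-coin SMP protocol for computing functions f : X × Y → Z. -/
structure PrivSMP (X Y Z : Type) [Fintype X] [Fintype Y] [Fintype Z] where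
  MA : Type
  MB : Type
  RA : Type
  RB : Type
  RC : Type
  [fMA : Fintype MA]
  [fMB : Fintype MB]
  [fRA : Fintype RA]
  [fRB : Fintype RB]
  [fRC : Fintype RC]
  [neMA : Nonempty MA]
  [neMB : Nonempty MB]
  [neRA : Nonempty RA]
  [neRB : Nonempty RB]
  [neRC : Nonempty RC]
  dRA : FinDist RA
  dRB : FinDist RB
  dRC : FinDist RC
  pA : X → RA → MA
  pB : Y → RB → MB
  pC : MA → MB → RC → Z

attribute [instance] PrivSMP.fMA PrivSMP.fMB PrivSMP.fRA PrivSMP.fRB PrivSMP.fRC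
attribute [instance] PrivSMP.neMA PrivSMP.neMB PrivSMP.neRA PrivSMP.neRB PrivSMP.neRC

namespace PrivSMP

variable {X Y Z : Type} [Fintype X] [Fintype Y] [Fintype Z]

/-- Joint distribution of all the (independent) randomness of the protocol,
ordered as (r_A, r_B, r_C). -/
def randDist (P : PrivSMP X Y Z) : FinDist (P.RA × P.RB × P.RC) :=
  P.dRA.prod (P.dRB.prod P.dRC)

/-- Probability of error on input (x, y). -/
def err (P : PrivSMP X Y Z) (f : X → Y → Z) (x : X) (y : Y) : ℝ :=
  FinDist.probEvent P.randDist (fun r => P.pC (P.pA x r.1) (P.pB y r.2.1) r.2.2 ≠ f x y)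

/-- The protocol computes f with worst-case error at most ε. -/
def Computes (P : PrivSMP X Y Z) (f : X → Y → Z) (ε : ℝ) : Prop :=
  ∀ x y, P.err f x y ≤ ε

/-- Communication cost ⌈log₂|M_A|⌉ + ⌈log₂|M_B|⌉. -/
def CC (P : PrivSMP X Y Z) : ℝ :=
  (⌈Real.logb 2 (Fintype.card P.MA)⌉ : ℝ) + (⌈Real.logb 2 (Fintype.card P.MB)⌉ : ℝ)

end PrivSMP

/-- Private-coin communication complexity of f with error ε. -/
def CCprivf {X Y Z : Type} [Fintype X] [Fintype Y] [Fintype Z]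
    (f : X → Y → Z) (ε : ℝ) : ℝ :=
  sInf {c : ℝ | ∃ P : PrivSMP X Y Z, P.Computes f ε ∧ P.CC = c}

/-- A shared-randomness SMP protocol for computing functions f : X × Y → Z. -/
structure ShSMP (X Y Z : Type) [Fintype X] [Fintype Y] [Fintype Z] where
  MA : Type
  MB : Type
  RA : Type
  RB : Type
  RC : Type
  RAC : Type
  RBC : Type
  [fMA : Fintype MA]
  [fMB : Fintype MB]
  [fRA : Fintype RA]
  [fRB : Fintype RB]
  [fRC : Fintype RC]
  [fRAC : Fintype RAC]
  [fRBC : Fintype RBC]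
  [neMA : Nonempty MA]
  [neMB : Nonempty MB]
  [neRA : Nonempty RA]
  [neRB : Nonempty RB]
  [neRC : Nonempty RC]
  [neRAC : Nonempty RAC]
  [neRBC : Nonempty RBC]
  dRA : FinDist RA
  dRB : FinDist RB
  dRC : FinDist RC
  dRAC : FinDist RAC
  dRBC : FinDist RBC
  pA : X → RA → RAC → MA
  pB : Y → RB → RBC → MB
  pC : MA → MB → RC → RAC → RBC → Z

attribute [instance] ShSMP.fMA ShSMP.fMB ShSMP.fRA ShSMP.fRB ShSMP.fRC ShSMP.fRAC ShSMP.fRBC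
attribute [instance] ShSMP.neMA ShSMP.neMB ShSMP.neRA ShSMP.neRB ShSMP.neRC ShSMP.neRAC
  ShSMP.neRBC

namespace ShSMP

variable {X Y Z : Type} [Fintype X] [Fintype Y] [Fintype Z]

/-- Joint distribution of all the (independent) randomness of the protocol,
ordered as (r_A, r_B, r_C, r_AC, r_BC). -/
def randDist (P : ShSMP X Y Z) : FinDist (P.RA × P.RB × P.RC × P.RAC × P.RBC) :=
  P.dRA.prod (P.dRB.prod (P.dRC.prod (P.dRAC.prod P.dRBC)))

/-- Probability of error on input (x, y). -/
def err (P : ShSMP X Y Z) (f : X → Y → Z) (x : X) (y : Y) : ℝ :=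
  FinDist.probEvent P.randDist
    (fun r => P.pC (P.pA x r.1 r.2.2.2.1) (P.pB y r.2.1 r.2.2.2.2) r.2.2.1 r.2.2.2.1 r.2.2.2.2
      ≠ f x y)

/-- The protocol computes f with worst-case error at most ε. -/
def Computes (P : ShSMP X Y Z) (f : X → Y → Z) (ε : ℝ) : Prop :=
  ∀ x y, P.err f x y ≤ ε

/-- Communication cost ⌈log₂|M_A|⌉ + ⌈log₂|M_B|⌉. -/
def CC (P : ShSMP X Y Z) : ℝ :=
  (⌈Real.logb 2 (Fintype.card P.MA)⌉ : ℝ) + (⌈Real.logb 2 (Fintype.card P.MB)⌉ : ℝ)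

/-- The underlying probability space when the input pair is drawn from μ, independently
of all the randomness of the protocol. A sample point is
((x, y), (r_A, r_B, r_C, r_AC, r_BC)). -/
def space (P : ShSMP X Y Z) (μ : FinDist (X × Y)) :
    FinDist ((X × Y) × (P.RA × P.RB × P.RC × P.RAC × P.RBC)) :=
  μ.prod P.randDist

/-- Alice's message as a random variable. -/
def rvMA (P : ShSMP X Y Z) (ω : (X × Y) × (P.RA × P.RB × P.RC × P.RAC × P.RBC)) : P.MA :=
  P.pA ω.1.1 ω.2.1 ω.2.2.2.2.1

/-- Bob's message as a random variable. -/
def rvMB (P : ShSMP X Y Z) (ω : (X × Y) × (P.RA × P.RB × P.RC × P.RAC × P.RBC)) : P.MB :=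
  P.pB ω.1.2 ω.2.2.1 ω.2.2.2.2.2

/-- The referee's private randomness as a random variable. -/
def rvRC (P : ShSMP X Y Z) (ω : (X × Y) × (P.RA × P.RB × P.RC × P.RAC × P.RBC)) : P.RC :=
  ω.2.2.2.1

/-- The Alice–referee shared randomness as a random variable. -/
def rvRAC (P : ShSMP X Y Z) (ω : (X × Y) × (P.RA × P.RB × P.RC × P.RAC × P.RBC)) : P.RAC :=
  ω.2.2.2.2.1

/-- The Bob–referee shared randomness as a random variable. -/
def rvRBC (P : ShSMP X Y Z) (ω : (X × Y) × (P.RA × P.RB × P.RC × P.RAC × P.RBC)) : P.RBC :=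
  ω.2.2.2.2.2

/-- Information leakage of the protocol on input distribution μ :
IL(Π,μ) = I(XY ; M_A M_B R_C R_AC R_BC). -/
def IL (P : ShSMP X Y Z) (μ : FinDist (X × Y)) : ℝ :=
  FinDist.mutualInfo (P.space μ) (fun ω => ω.1)
    (fun ω => (P.rvMA ω, P.rvMB ω, P.rvRC ω, P.rvRAC ω, P.rvRBC ω))

/-- Worst-case (over input distributions) information leakage IL(Π). -/
def ILmax (P : ShSMP X Y Z) : ℝ :=
  ⨆ μ : FinDist (X × Y), P.IL μ

/-- Information complexity of the protocol on input distribution μ :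
IC(Π,μ) = I(X ; M_A | R_AC) + I(Y ; M_B | R_BC). -/
def IC (P : ShSMP X Y Z) (μ : FinDist (X × Y)) : ℝ :=
  FinDist.condMutualInfo (P.space μ) (fun ω => ω.1.1) (fun ω => P.rvMA ω) (fun ω => P.rvRAC ω)
    + FinDist.condMutualInfo (P.space μ) (fun ω => ω.1.2) (fun ω => P.rvMB ω)
      (fun ω => P.rvRBC ω)

/-- Worst-case (over input distributions) information complexity IC(Π). -/
def ICmax (P : ShSMP X Y Z) : ℝ :=
  ⨆ μ : FinDist (X × Y), P.IC μ

end ShSMP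

/-- Shared-randomness communication complexity of f with error ε. -/
def CCshf {X Y Z : Type} [Fintype X] [Fintype Y] [Fintype Z]
    (f : X → Y → Z) (ε : ℝ) : ℝ :=
  sInf {c : ℝ | ∃ P : ShSMP X Y Z, P.Computes f ε ∧ P.CC = c}

/-- Information leakage for computing f with error ε. -/
def ILf {X Y Z : Type} [Fintype X] [Fintype Y] [Fintype Z]
    (f : X → Y → Z) (ε : ℝ) : ℝ :=
  sInf {c : ℝ | ∃ P : ShSMP X Y Z, P.Computes f ε ∧ P.ILmax = c}

/-- Information complexity for computing f with error ε. -/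
def ICf {X Y Z : Type} [Fintype X] [Fintype Y] [Fintype Z]
    (f : X → Y → Z) (ε : ℝ) : ℝ :=
  sInf {c : ℝ | ∃ P : ShSMP X Y Z, P.Computes f ε ∧ P.ICmax = c}

/-- An average-length SMP protocol: a shared-randomness SMP protocol whose (countable)
message sets carry length functions satisfying Kraft's inequality. -/
structure AvgSMP (X Y Z : Type) [Fintype X] [Fintype Y] [Fintype Z] where
  MA : Type
  MB : Type
  RA : Type
  RB : Type
  RC : Type
  RAC : Type
  RBC : Type
  [cMA : Countable MA]
  [cMB : Countable MB]
  [neMA : Nonempty MA]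
  [neMB : Nonempty MB]
  [fRA : Fintype RA]
  [fRB : Fintype RB]
  [fRC : Fintype RC]
  [fRAC : Fintype RAC]
  [fRBC : Fintype RBC]
  [neRA : Nonempty RA]
  [neRB : Nonempty RB]
  [neRC : Nonempty RC]
  [neRAC : Nonempty RAC]
  [neRBC : Nonempty RBC]
  lA : MA → ℕ
  lB : MB → ℕ
  kraftA : ∑' m : MA, ((2 : ℝ) ^ lA m)⁻¹ ≤ 1
  kraftB : ∑' m : MB, ((2 : ℝ) ^ lB m)⁻¹ ≤ 1
  dRA : FinDist RA
  dRB : FinDist RB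
  dRC : FinDist RC
  dRAC : FinDist RAC
  dRBC : FinDist RBC
  pA : X → RA → RAC → MA
  pB : Y → RB → RBC → MB
  pC : MA → MB → RC → RAC → RBC → Z

attribute [instance] AvgSMP.cMA AvgSMP.cMB AvgSMP.neMA AvgSMP.neMB
attribute [instance] AvgSMP.fRA AvgSMP.fRB AvgSMP.fRC AvgSMP.fRAC AvgSMP.fRBC
attribute [instance] AvgSMP.neRA AvgSMP.neRB AvgSMP.neRC AvgSMP.neRAC AvgSMP.neRBC

namespace AvgSMP

variable {X Y Z : Type} [Fintype X] [Fintype Y] [Fintype Z]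

/-- Joint distribution of all the (independent) randomness of the protocol,
ordered as (r_A, r_B, r_C, r_AC, r_BC). -/
def randDist (P : AvgSMP X Y Z) : FinDist (P.RA × P.RB × P.RC × P.RAC × P.RBC) :=
  P.dRA.prod (P.dRB.prod (P.dRC.prod (P.dRAC.prod P.dRBC)))

/-- Probability of error on input (x, y). -/
def err (P : AvgSMP X Y Z) (f : X → Y → Z) (x : X) (y : Y) : ℝ :=
  FinDist.probEvent P.randDist
    (fun r => P.pC (P.pA x r.1 r.2.2.2.1) (P.pB y r.2.1 r.2.2.2.2) r.2.2.1 r.2.2.2.1 r.2.2.2.2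
      ≠ f x y)

/-- The protocol computes f with worst-case error at most ε. -/
def Computes (P : AvgSMP X Y Z) (f : X → Y → Z) (ε : ℝ) : Prop :=
  ∀ x y, P.err f x y ≤ ε

/-- Average communication cost on input (x, y): E[ℓ_A(M_A) + ℓ_B(M_B)]. -/
def CCavOn (P : AvgSMP X Y Z) (x : X) (y : Y) : ℝ :=
  ∑ r : P.RA × P.RB × P.RC × P.RAC × P.RBC, P.randDist.prob r *
    ((P.lA (P.pA x r.1 r.2.2.2.1) : ℝ) + (P.lB (P.pB y r.2.1 r.2.2.2.2) : ℝ))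

/-- Average communication cost of the protocol (worst case over inputs). -/
def CCav (P : AvgSMP X Y Z) : ℝ :=
  ⨆ xy : X × Y, P.CCavOn xy.1 xy.2

/-- The underlying probability space when the input pair is drawn from μ. -/
def space (P : AvgSMP X Y Z) (μ : FinDist (X × Y)) :
    FinDist ((X × Y) × (P.RA × P.RB × P.RC × P.RAC × P.RBC)) :=
  μ.prod P.randDist

/-- Information complexity of the protocol on input distribution μ :
IC(Π,μ) = I(X ; M_A | R_AC) + I(Y ; M_B | R_BC). -/
def IC (P : AvgSMP X Y Z) (μ : FinDist (X × Y)) : ℝ :=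
  FinDist.condMutualInfo (P.space μ) (fun ω => ω.1.1)
      (fun ω => P.pA ω.1.1 ω.2.1 ω.2.2.2.2.1) (fun ω => ω.2.2.2.2.1)
    + FinDist.condMutualInfo (P.space μ) (fun ω => ω.1.2)
      (fun ω => P.pB ω.1.2 ω.2.2.1 ω.2.2.2.2.2) (fun ω => ω.2.2.2.2.2)

/-- Worst-case (over input distributions) information complexity. -/
def ICmax (P : AvgSMP X Y Z) : ℝ :=
  ⨆ μ : FinDist (X × Y), P.IC μ

end AvgSMP

/-- Average-length communication complexity of f with error ε. -/
def CCavf {X Y Z : Type} [Fintype X] [Fintype Y] [Fintype Z]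
    (f : X → Y → Z) (ε : ℝ) : ℝ :=
  sInf {c : ℝ | ∃ P : AvgSMP X Y Z, P.Computes f ε ∧ P.CCav = c}

/-- The equality function on n-bit strings. -/
def EQfun (n : ℕ) : (Fin n → Bool) → (Fin n → Bool) → Bool :=
  fun x y => decide (x = y)

end

/-!
Let `δ = 1/2 - ε` and let `a`, `b` be the message lengths of Alice and Bob. By Hoeffding's
inequality and a union bound over Bob's at most `2^b` messages, once `k * g₃(ε) > b + 1` every
input `x` of Alice admits `k` of her messages whose empirical acceptance probabilities are within
`δ` of the true ones, simultaneously for all messages of Bob. Averaging over Bob's message, such a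
sample determines every `Pr[Π(x, y) = 1]` up to less than `2δ = 1 - 2ε`, while for `x ≠ x'` these
probabilities differ by at least `1 - 2ε` at `y = x`. So distinct inputs get distinct samples,
`2^n ≤ 2^(a k)`, hence `g₃ n ≤ a (b + 1 + g₃)`, and AM–GM gives `2 √(g₃ n) ≤ a + b + 1 + g₃`.
-/

open MeasureTheory ProbabilityTheory Real

namespace FinDist

variable {Ω Ω' : Type} [Fintype Ω] [Fintype Ω']

def expect (p : FinDist Ω) (g : Ω → ℝ) : ℝ :=
  ∑ ω, p.prob ω * g ω

lemma probEvent_eq_expect (p : FinDist Ω) (E : Ω → Prop) :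
    p.probEvent E = p.expect fun ω => if E ω then 1 else 0 := by
  simp only [probEvent, expect, mul_ite, mul_one, mul_zero]

lemma probEvent_nonneg (p : FinDist Ω) (E : Ω → Prop) : 0 ≤ p.probEvent E :=
  Finset.sum_nonneg fun ω _ => by split_ifs <;> simp [p.nonneg ω]

lemma probEvent_le_one (p : FinDist Ω) (E : Ω → Prop) : p.probEvent E ≤ 1 :=
  p.sum_one ▸ Finset.sum_le_sum fun ω _ => by split_ifs <;> simp [p.nonneg ω]

lemma probEvent_not (p : FinDist Ω) (E : Ω → Prop) :
    p.probEvent (fun ω => ¬ E ω) = 1 - p.probEvent E := by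
  rw [← p.sum_one, probEvent, probEvent, ← Finset.sum_sub_distrib]
  exact Finset.sum_congr rfl fun ω _ => by split_ifs <;> simp

lemma expect_sub (p : FinDist Ω) (g h : Ω → ℝ) :
    p.expect (fun ω => g ω - h ω) = p.expect g - p.expect h := by
  simp only [expect, mul_sub, Finset.sum_sub_distrib]

lemma expect_prod (p : FinDist Ω) (q : FinDist Ω') (g : Ω × Ω' → ℝ) :
    (p.prod q).expect g = p.expect fun a => q.expect fun b => g (a, b) := by
  simp only [expect, prod, Fintype.sum_prod_type, Finset.mul_sum, mul_assoc]

lemma expect_comm (p : FinDist Ω) (q : FinDist Ω') (g : Ω → Ω' → ℝ) :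
    (p.expect fun a => q.expect fun b => g a b) = q.expect fun b => p.expect fun a => g a b := by
  simp only [expect, Finset.mul_sum]
  rw [Finset.sum_comm]
  simp only [mul_left_comm]

lemma abs_expect_lt (p : FinDist Ω) {g : Ω → ℝ} {D : ℝ} (hg : ∀ ω, |g ω| < D) :
    |p.expect g| < D := by
  obtain ⟨ω₀, -, hω₀⟩ : ∃ ω ∈ Finset.univ, (0 : ℝ) < p.prob ω :=
    Finset.exists_lt_of_sum_lt (by simp [p.sum_one])
  calc |p.expect g| ≤ ∑ ω, p.prob ω * |g ω| := by
        refine (Finset.abs_sum_le_sum_abs _ _).trans_eq ?_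
        simp only [abs_mul, abs_of_nonneg (p.nonneg _)]
    _ < ∑ ω, p.prob ω * D :=
        Finset.sum_lt_sum (fun ω _ => mul_le_mul_of_nonneg_left (hg ω).le (p.nonneg ω))
          ⟨ω₀, Finset.mem_univ _, mul_lt_mul_of_pos_left (hg ω₀) hω₀⟩
    _ = D := by rw [← Finset.sum_mul, p.sum_one, one_mul]

lemma sum_probVal_mul {α : Type} [Fintype α] (p : FinDist Ω) (A : Ω → α) (g : α → ℝ) :
    ∑ a, p.probVal A a * g a = p.expect (g ∘ A) := by
  simp only [probVal, probEvent, expect, Finset.sum_mul, ite_mul, zero_mul, Function.comp]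
  rw [Finset.sum_comm]
  exact Finset.sum_congr rfl fun ω _ => by simp [eq_comm (a := A ω)]

noncomputable def map {α : Type} [Fintype α] (p : FinDist Ω) (A : Ω → α) : FinDist α where
  prob := p.probVal A
  nonneg _ := probEvent_nonneg _ _
  sum_one := by simpa [expect, p.sum_one] using p.sum_probVal_mul A 1

lemma expect_map {α : Type} [Fintype α] (p : FinDist Ω) (A : Ω → α) (g : α → ℝ) :
    (p.map A).expect g = p.expect (g ∘ A) :=
  p.sum_probVal_mul A g

section Measure

variable [MeasurableSpace Ω]

noncomputable def toMeasure (p : FinDist Ω) : Measure Ω :=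
  ∑ ω, ENNReal.ofReal (p.prob ω) • Measure.dirac ω

instance (p : FinDist Ω) : IsProbabilityMeasure p.toMeasure := by
  constructor
  simp only [toMeasure, Measure.coe_finsetSum, Finset.sum_apply, Measure.smul_apply,
    measure_univ, smul_eq_mul, mul_one]
  rw [← ENNReal.ofReal_sum_of_nonneg fun ω _ => p.nonneg ω, p.sum_one, ENNReal.ofReal_one]

lemma integral_toMeasure [DiscreteMeasurableSpace Ω] (p : FinDist Ω) (g : Ω → ℝ) :
    ∫ ω, g ω ∂p.toMeasure = p.expect g := by
  rw [integral_fintype (Integrable.of_finite)]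
  refine Finset.sum_congr rfl fun ω _ => ?_
  simp [toMeasure, measureReal_def, Measure.dirac_apply', Set.indicator, p.nonneg ω]

end Measure

end FinDist

section Hoeffding

variable {Ω : Type*} [MeasurableSpace Ω] {μ : Measure Ω} [IsProbabilityMeasure μ]

lemma measureReal_abs_sum_sub_ge_le {g : Ω → ℝ} (hg : Measurable g)
    (hg01 : ∀ ω, g ω ∈ Set.Icc 0 1) (k : ℕ) {δ : ℝ} (hδ : 0 ≤ δ) :
    (Measure.pi fun _ : Fin k => μ).real {T | δ * k ≤ |∑ i, g (T i) - k * μ[g]|}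
      ≤ 2 * exp (-(2 * k * δ ^ 2)) := by
  set ν := Measure.pi fun _ : Fin k => μ
  have hcoord (i : Fin k) : HasSubgaussianMGF (fun T : Fin k → Ω => g (T i) - μ[g])
      ((‖(1 : ℝ) - 0‖₊ / 2) ^ 2) ν := by
    have hi := measurePreserving_eval (fun _ : Fin k => μ) i
    have h : HasSubgaussianMGF (fun ω => g ω - μ[g]) ((‖(1 : ℝ) - 0‖₊ / 2) ^ 2)
        (ν.map (Function.eval i)) := by
      rw [hi.map_eq]
      exact hasSubgaussianMGF_of_mem_Icc hg.aemeasurable (ae_of_all μ hg01)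
    exact h.of_map hi.measurable.aemeasurable
  have hsum := HasSubgaussianMGF.sum_of_iIndepFun
    (iIndepFun_pi (X := fun _ ω => g ω - μ[g]) fun _ => (hg.sub_const _).aemeasurable)
    (s := Finset.univ) fun i _ => hcoord i
  have hvar : ((∑ _i : Fin k, (‖(1 : ℝ) - 0‖₊ / 2) ^ 2 : NNReal) : ℝ) = k / 4 := by
    simp only [sub_zero, nnnorm_one, Finset.sum_const, Finset.card_univ, Fintype.card_fin,
      nsmul_eq_mul, NNReal.coe_mul, NNReal.coe_natCast, NNReal.coe_pow, NNReal.coe_div,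
      NNReal.coe_one, NNReal.coe_ofNat]
    ring
  have hexp : -(δ * k) ^ 2 / (2 * ∑ _i : Fin k, ((‖(1 : ℝ) - 0‖₊ / 2) ^ 2 : NNReal))
      = -(2 * k * δ ^ 2) := by
    rw [hvar]
    rcases eq_or_ne k 0 with rfl | hk
    · simp
    · field_simp
      ring
  set S : (Fin k → Ω) → ℝ := fun T => ∑ i, (g (T i) - μ[g])
  have hsplit : {T : Fin k → Ω | δ * k ≤ |∑ i, g (T i) - k * μ[g]|}
      ⊆ {T | δ * k ≤ S T} ∪ {T | δ * k ≤ (-S) T} := by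
    intro T hT
    simp only [S, Finset.sum_sub_distrib, Finset.sum_const, Finset.card_univ, Fintype.card_fin,
      nsmul_eq_mul, Set.mem_ofPred_eq, Set.mem_union, Pi.neg_apply] at hT ⊢
    exact le_abs.1 hT
  calc ν.real {T | δ * k ≤ |∑ i, g (T i) - k * μ[g]|}
      ≤ ν.real {T | δ * k ≤ S T} + ν.real {T | δ * k ≤ (-S) T} :=
        (measureReal_mono hsplit).trans (measureReal_union_le _ _)
    _ ≤ exp (-(2 * k * δ ^ 2)) + exp (-(2 * k * δ ^ 2)) := by
        rw [← hexp]
        exact add_le_add (hsum.measure_ge_le (by positivity))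
          (hsum.neg.measure_ge_le (by positivity))
    _ = 2 * exp (-(2 * k * δ ^ 2)) := by ring

theorem exists_forall_abs_sum_sub_lt {J : Type*} [Fintype J] {f : J → Ω → ℝ}
    (hf : ∀ j, Measurable (f j)) (hf01 : ∀ j ω, f j ω ∈ Set.Icc 0 1) {k : ℕ} {δ : ℝ}
    (hδ : 0 ≤ δ) (hk : Fintype.card J * (2 * exp (-(2 * k * δ ^ 2))) < 1) :
    ∃ T : Fin k → Ω, ∀ j, |∑ i, f j (T i) - k * μ[f j]| < δ * k := by
  set ν := Measure.pi fun _ : Fin k => μ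
  set bad := ⋃ j, {T : Fin k → Ω | δ * k ≤ |∑ i, f j (T i) - k * μ[f j]|}
  have hbad : ν.real bad < 1 := calc
    ν.real bad ≤ ∑ j, ν.real {T | δ * k ≤ |∑ i, f j (T i) - k * μ[f j]|} :=
      measureReal_iUnion_fintype_le _
    _ ≤ ∑ _j : J, 2 * exp (-(2 * k * δ ^ 2)) :=
      Finset.sum_le_sum fun j _ => measureReal_abs_sum_sub_ge_le (hf j) (hf01 j) k hδ
    _ < 1 := by simpa using hk
  obtain ⟨T, hT⟩ : ∃ T, T ∉ bad := by
    by_contra! h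
    simp [Set.eq_univ_of_forall h] at hbad
  simp only [bad, Set.mem_iUnion, Set.mem_ofPred_eq, not_exists, not_le] at hT
  exact ⟨T, hT⟩

end Hoeffding

lemma ceil_logb_two_natCast (m : ℕ) : (⌈logb 2 m⌉ : ℝ) = Nat.clog 2 m := by
  have h := ceil_logb_natCast (b := 2) (Nat.cast_nonneg (α := ℝ) m)
  rw [Nat.cast_ofNat, Int.clog_natCast] at h
  rw [h, Int.cast_natCast]

namespace PrivSMP

section Bool

variable {X Y : Type} [Fintype X] [Fintype Y] (P : PrivSMP X Y Bool)

noncomputable def msgA (x : X) : FinDist P.MA := P.dRA.map (P.pA x)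

noncomputable def msgB (y : Y) : FinDist P.MB := P.dRB.map (P.pB y)

noncomputable def refAcc (mA : P.MA) (mB : P.MB) : ℝ :=
  P.dRC.probEvent fun rC => P.pC mA mB rC = true

noncomputable def accMsg (x : X) (mB : P.MB) : ℝ :=
  (P.msgA x).expect fun mA => P.refAcc mA mB

noncomputable def acc (x : X) (y : Y) : ℝ :=
  P.randDist.probEvent fun r => P.pC (P.pA x r.1) (P.pB y r.2.1) r.2.2 = true

lemma acc_eq_expect_accMsg (x : X) (y : Y) : P.acc x y = (P.msgB y).expect (P.accMsg x) := by
  have h : P.acc x y = P.dRA.expect fun rA => P.dRB.expect fun rB =>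
      P.refAcc (P.pA x rA) (P.pB y rB) := by
    simp only [acc, refAcc, randDist, FinDist.probEvent_eq_expect, FinDist.expect_prod]
  rw [h, FinDist.expect_comm]
  simp only [msgA, msgB, accMsg, FinDist.expect_map, Function.comp_def]

lemma err_eq_abs_acc_sub (f : X → Y → Bool) (x : X) (y : Y) :
    P.err f x y = |P.acc x y - if f x y then 1 else 0| := by
  have h0 : 0 ≤ P.acc x y := FinDist.probEvent_nonneg _ _
  have h1 : P.acc x y ≤ 1 := FinDist.probEvent_le_one _ _
  cases hf : f x y
  · rw [err, hf, if_neg Bool.false_ne_true, sub_zero, abs_of_nonneg h0, acc]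
    simp only [ne_eq, Bool.not_eq_false]
  · rw [err, hf, if_pos rfl, abs_of_nonpos (sub_nonpos.2 h1), neg_sub, acc,
      ← FinDist.probEvent_not]

lemma one_sub_two_mul_le_abs_acc_sub {f : X → Y → Bool} {ε : ℝ} (hP : P.Computes f ε)
    {x x' : X} {y : Y} (h : f x y ≠ f x' y) : 1 - 2 * ε ≤ |P.acc x y - P.acc x' y| := by
  have hx := hP x y
  have hx' := hP x' y
  rw [err_eq_abs_acc_sub] at hx hx'
  have hb : |(if f x y then 1 else 0) - (if f x' y then 1 else 0 : ℝ)| = 1 := by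
    cases hfx : f x y <;> cases hfx' : f x' y <;> simp_all
  have htri₁ := abs_sub_le (if f x y then 1 else 0 : ℝ) (P.acc x y) (if f x' y then 1 else 0)
  have htri₂ := abs_sub_le (P.acc x y) (P.acc x' y) (if f x' y then 1 else 0 : ℝ)
  rw [abs_sub_comm] at hx
  linarith

def IsGoodSample (x : X) (δ : ℝ) {k : ℕ} (T : Fin k → P.MA) : Prop :=
  ∀ mB, |∑ i, P.refAcc (T i) mB - k * P.accMsg x mB| < δ * k

lemma exists_isGoodSample (x : X) {k : ℕ} {δ : ℝ} (hδ : 0 ≤ δ)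
    (hk : Fintype.card P.MB * (2 * exp (-(2 * k * δ ^ 2))) < 1) :
    ∃ T : Fin k → P.MA, P.IsGoodSample x δ T := by
  let _ : MeasurableSpace P.MA := ⊤
  have := exists_forall_abs_sum_sub_lt (μ := (P.msgA x).toMeasure)
    (f := fun mB mA => P.refAcc mA mB) (fun _ => .of_discrete)
    (fun mB mA => ⟨FinDist.probEvent_nonneg _ _, FinDist.probEvent_le_one _ _⟩) hδ hk
  simpa only [FinDist.integral_toMeasure, IsGoodSample, accMsg] using this

lemma abs_acc_sub_lt_of_isGoodSample {x x' : X} {δ : ℝ} {k : ℕ} {T : Fin k → P.MA}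
    (hx : P.IsGoodSample x δ T) (hx' : P.IsGoodSample x' δ T) (y : Y) :
    |P.acc x y - P.acc x' y| < 2 * δ := by
  obtain ⟨mB₀⟩ := P.neMB
  have hk : (0 : ℝ) < k := by
    have hδk : 0 < δ * k := (abs_nonneg _).trans_lt (hx mB₀)
    exact Nat.cast_pos.2 (Nat.pos_of_ne_zero fun h => by simp [h] at hδk)
  rw [acc_eq_expect_accMsg, acc_eq_expect_accMsg, ← FinDist.expect_sub]
  refine FinDist.abs_expect_lt _ fun mB => ?_
  have := abs_sub_lt_iff.1 (hx mB)
  have := abs_sub_lt_iff.1 (hx' mB)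
  rw [abs_sub_lt_iff]
  constructor <;> nlinarith

theorem card_le_card_pow {f : X → Y → Bool} {ε : ℝ} (hP : P.Computes f ε)
    (hf : Function.Injective f) (hε : ε ≤ 1 / 2) {k : ℕ}
    (hk : Fintype.card P.MB * (2 * exp (-(2 * k * (1 / 2 - ε) ^ 2))) < 1) :
    Fintype.card X ≤ Fintype.card P.MA ^ k := by
  choose T hT using fun x => P.exists_isGoodSample x (sub_nonneg.2 hε) hk
  have hT_inj : Function.Injective T := by
    intro x x' hxx'
    by_contra hne
    obtain ⟨y, hy⟩ : ∃ y, f x y ≠ f x' y := Function.ne_iff.1 (hf.ne hne)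
    have h1 := P.one_sub_two_mul_le_abs_acc_sub hP hy
    have h2 := P.abs_acc_sub_lt_of_isGoodSample (hT x) (hxx' ▸ hT x') y
    linarith
  simpa using Fintype.card_le_of_injective T hT_inj

end Bool

lemma CC_eq_clog {X Y Z : Type} [Fintype X] [Fintype Y] [Fintype Z] (P : PrivSMP X Y Z) :
    P.CC = Nat.clog 2 (Fintype.card P.MA) + Nat.clog 2 (Fintype.card P.MB) := by
  rw [CC, ceil_logb_two_natCast, ceil_logb_two_natCast]

end PrivSMP

lemma EQfun_injective (n : ℕ) : Function.Injective (EQfun n) := fun x x' h => by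
  simpa [EQfun] using congrFun h x'

lemma g3_pos {ε : ℝ} (hε : ε < 1 / 2) : 0 < g3 ε := by
  have hlog2e : 0 < log2e := logb_pos one_lt_two (one_lt_exp_iff.2 one_pos)
  have hδ : 0 < 1 / 2 - ε := by linarith
  unfold g3
  positivity

lemma g3_mul_log_two (ε : ℝ) : g3 ε * log 2 = 2 * (1 / 2 - ε) ^ 2 := by
  rw [g3, log2e, logb, log_exp]
  field_simp

lemma exists_nat_lt_mul_le_add {c g : ℝ} (hc : 0 ≤ c) (hg : 0 < g) :
    ∃ k : ℕ, c < k * g ∧ k * g ≤ c + g := by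
  refine ⟨⌊c / g⌋₊ + 1, ?_, ?_⟩
  · rw [← div_lt_iff₀ hg]
    exact_mod_cast Nat.lt_floor_add_one (c / g)
  · rw [← le_div_iff₀ hg, add_div, div_self hg.ne']
    push_cast
    gcongr
    exact Nat.floor_le (by positivity)

lemma card_mul_two_mul_exp_lt_one {m b k : ℕ} {ε : ℝ} (hm : m ≤ 2 ^ b)
    (hk : (b + 1 : ℝ) < k * g3 ε) : m * (2 * exp (-(2 * k * (1 / 2 - ε) ^ 2))) < 1 := by
  have hexp : 2 * k * (1 / 2 - ε) ^ 2 = k * g3 ε * log 2 := by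
    rw [mul_assoc (k : ℝ), g3_mul_log_two]; ring
  calc m * (2 * exp (-(2 * k * (1 / 2 - ε) ^ 2)))
      ≤ 2 ^ b * (2 * exp (-(k * g3 ε * log 2))) := by
        rw [hexp]
        gcongr
        exact_mod_cast hm
    _ < 2 ^ b * (2 * exp (-((b + 1 : ℕ) * log 2))) := by
        gcongr
        exact_mod_cast hk
    _ = 1 := by
        rw [exp_neg, exp_nat_mul, exp_log two_pos, pow_succ]
        field_simp

lemma two_sqrt_mul_sqrt_le {g n a b k : ℝ} (hg : 0 < g) (ha : 0 ≤ a) (hb : 0 ≤ b)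
    (hn : n ≤ a * k) (hk : k * g ≤ b + 1 + g) : 2 * √g * √n ≤ a + b + 1 + g := by
  have hgn : g * n ≤ a * (b + 1 + g) := calc
    g * n ≤ g * (a * k) := mul_le_mul_of_nonneg_left hn hg.le
    _ = a * (k * g) := by ring
    _ ≤ a * (b + 1 + g) := mul_le_mul_of_nonneg_left hk ha
  have hsqrt : √(g * n) ≤ (a + b + 1 + g) / 2 :=
    sqrt_le_iff.2 ⟨by positivity, by nlinarith [sq_nonneg (a - (b + 1 + g))]⟩
  rw [mul_assoc, ← sqrt_mul hg.le]
  linarith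

theorem ccpriv_lower_bound_equality_general (n : ℕ) (ε : ℝ) (hε : ε < 1 / 2)
    (P : PrivSMP (Fin n → Bool) (Fin n → Bool) Bool) (hP : P.Computes (EQfun n) ε) :
    P.CC ≥ 2 * Real.sqrt (g3 ε) * Real.sqrt n - g3 ε - 6 := by
  set a := Nat.clog 2 (Fintype.card P.MA)
  set b := Nat.clog 2 (Fintype.card P.MB)
  have hg := g3_pos hε
  obtain ⟨k, hk_gt, hk_le⟩ := exists_nat_lt_mul_le_add (by positivity : (0 : ℝ) ≤ b + 1) hg
  have hcard : 2 ^ n ≤ Fintype.card P.MA ^ k := by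
    simpa using P.card_le_card_pow hP (EQfun_injective n) hε.le
      (card_mul_two_mul_exp_lt_one (Nat.le_pow_clog one_lt_two _) hk_gt)
  have hn : n ≤ a * k := by
    rw [← Nat.pow_le_pow_iff_right one_lt_two, pow_mul]
    exact hcard.trans (Nat.pow_le_pow_left (Nat.le_pow_clog one_lt_two _) k)
  have := two_sqrt_mul_sqrt_le hg a.cast_nonneg b.cast_nonneg
    (by exact_mod_cast hn : (n : ℝ) ≤ a * k) hk_le
  rw [PrivSMP.CC_eq_clog]
  linarith

/-- Lower bound on the private-coin communication cost of any SMP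
protocol computing equality on n bits with worst-case error at most ε < 1/2. -/
theorem ccpriv_lower_bound_equality (n : ℕ) (ε : ℝ) (hε0 : 0 ≤ ε) (hε : ε < 1 / 2)
    (P : PrivSMP (Fin n → Bool) (Fin n → Bool) Bool) (hP : P.Computes (EQfun n) ε) :
    P.CC ≥ 2 * Real.sqrt (g3 ε) * Real.sqrt n - g3 ε - 6 :=
  ccpriv_lower_bound_equality_general n ε hε P hP
end

section
/- Let X, Y, M_A, M_B, R_AC, R_BC be random variables taking values in finite sets on a common probability space such that: R_BC is independent of the triple (X, M_A, R_AC); R_AC is independent of the triple (Y, M_B, R_BC); and the following conditional independences (Markov chains) hold: I(Y; M_A | X, R_AC, R_BC) = 0, I(X; M_B | Y, M_A, R_AC, R_BC) = 0, and I(M_A; M_B | Y, R_AC, R_BC) = 0. Then I(X,Y; M_A,M_B | R_AC,R_BC) = I(X; M_A | R_AC) + I(Y; M_B | R_BC) − I(M_A; M_B | R_AC, R_BC). -/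
/-! Since `R_BC` is independent of `(X, M_A, R_AC)`, adding `R_BC` to the condition does not
change `I(X; M_A | R_AC)`, and symmetrically for Bob, so everything may be conditioned on
`R = (R_AC, R_BC)`. What remains is the chain rule:
`I(XY; M_A M_B | R) = I(XY; M_A | R) + I(XY; M_B | M_A R)`, where the Markov chains kill
`I(Y; M_A | X R)` and `I(X; M_B | Y M_A R)`; expanding `I(M_A Y; M_B | R)` in both orders and
using `I(M_A; M_B | Y R) = 0` gives `I(Y; M_B | M_A R) = I(Y; M_B | R) - I(M_A; M_B | R)`. -/

open scoped BigOperators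
open scoped Classical

lemma Real.neg_mul_logb_mul (x y : ℝ) :
    -(x * y * Real.logb 2 (x * y)) = y * -(x * Real.logb 2 x) + x * -(y * Real.logb 2 y) := by
  rcases eq_or_ne x 0 with rfl | hx
  · simp
  rcases eq_or_ne y 0 with rfl | hy
  · simp
  rw [Real.logb_mul hx hy]
  ring

namespace FinDist

variable {Ω : Type} [Fintype Ω] (p : FinDist Ω) {α α' β β' γ γ' δ : Type*}

lemma probEvent_congr {E F : Ω → Prop} (h : ∀ ω, E ω ↔ F ω) :
    p.probEvent E = p.probEvent F := by
  simp only [probEvent, h]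

lemma probEvent_and_comp_eq_sum (E : Ω → Prop) (B : Ω → β) (f : β → γ) (c : γ) :
    p.probEvent (fun ω => E ω ∧ f (B ω) = c)
      = ∑ b ∈ (Finset.univ.image B).filter (f · = c), p.probEvent (fun ω => E ω ∧ B ω = b) := by
  unfold probEvent
  rw [Finset.sum_comm]
  refine Finset.sum_congr rfl fun ω _ => ?_
  by_cases hE : E ω
  · simp [hE, Finset.sum_ite_eq]
  · simp [hE]

lemma sum_probVal (A : Ω → α) : ∑ a ∈ Finset.univ.image A, p.probVal A a = 1 := by
  unfold probVal probEvent
  rw [Finset.sum_comm, ← p.sum_one]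
  exact Finset.sum_congr rfl fun ω _ => by simp

lemma probVal_eq_zero_of_notMem {A : Ω → α} {a : α} (ha : a ∉ Finset.univ.image A) :
    p.probVal A a = 0 :=
  Finset.sum_eq_zero fun ω _ =>
    if_neg fun (h : A ω = a) => ha (h ▸ Finset.mem_image_of_mem A (Finset.mem_univ ω))

lemma entropy_eq_sum_of_forall_mem {A : Ω → α} {s : Finset α} (hs : ∀ ω, A ω ∈ s) :
    p.entropy A = ∑ a ∈ s, -(p.probVal A a * Real.logb 2 (p.probVal A a)) :=
  Finset.sum_subset (Finset.image_subset_iff.2 fun ω _ => hs ω) fun a _ ha => by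
    simp [probVal_eq_zero_of_notMem p ha]

lemma entropy_comp_of_injective (A : Ω → α) {f : α → β} (hf : Function.Injective f) :
    p.entropy (fun ω => f (A ω)) = p.entropy A := by
  have hval : ∀ a, p.probVal (fun ω => f (A ω)) (f a) = p.probVal A a := fun a =>
    probEvent_congr p fun ω => hf.eq_iff
  have himage : Finset.univ.image (fun ω => f (A ω)) = (Finset.univ.image A).image f := by
    rw [Finset.image_image]
    rfl
  unfold entropy
  rw [himage, Finset.sum_image hf.injOn]
  simp only [hval]

lemma condMutualInfo_comm (A : Ω → α) (B : Ω → β) (C : Ω → γ) :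
    p.condMutualInfo A B C = p.condMutualInfo B A C := by
  have hswap : p.entropy (fun ω => (B ω, A ω, C ω)) = p.entropy (fun ω => (A ω, B ω, C ω)) :=
    entropy_comp_of_injective p (fun ω => (A ω, B ω, C ω)) (f := fun t => (t.2.1, t.1, t.2.2))
      fun _ _ h => by simp_all [Prod.ext_iff]
  simp only [condMutualInfo, hswap]
  ring

lemma condMutualInfo_comp_left_of_injective (A : Ω → α) (B : Ω → β) (C : Ω → γ)
    {f : α → α'} (hf : Function.Injective f) :
    p.condMutualInfo (fun ω => f (A ω)) B C = p.condMutualInfo A B C := by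
  have hAC := entropy_comp_of_injective p (fun ω => (A ω, C ω))
    (hf.prodMap Function.injective_id)
  have hABC := entropy_comp_of_injective p (fun ω => (A ω, B ω, C ω))
    (hf.prodMap Function.injective_id)
  simp only [Prod.map_apply, id] at hAC hABC
  simp only [condMutualInfo, hAC, hABC]

lemma condMutualInfo_comp_cond_of_injective (A : Ω → α) (B : Ω → β) (C : Ω → γ)
    {f : γ → γ'} (hf : Function.Injective f) :
    p.condMutualInfo A B (fun ω => f (C ω)) = p.condMutualInfo A B C := by
  have hAC := entropy_comp_of_injective p (fun ω => (A ω, C ω))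
    (Function.injective_id.prodMap hf)
  have hBC := entropy_comp_of_injective p (fun ω => (B ω, C ω))
    (Function.injective_id.prodMap hf)
  have hABC := entropy_comp_of_injective p (fun ω => (A ω, B ω, C ω))
    (Function.injective_id.prodMap (Function.injective_id.prodMap hf))
  simp only [Prod.map_apply, id] at hAC hBC hABC
  simp only [condMutualInfo, hAC, hBC, hABC, entropy_comp_of_injective p C hf]

lemma condMutualInfo_pair_right (A : Ω → α) (B : Ω → β) (B' : Ω → β') (C : Ω → γ) :
    p.condMutualInfo A (fun ω => (B ω, B' ω)) C
      = p.condMutualInfo A B C + p.condMutualInfo A B' (fun ω => (B ω, C ω)) := by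
  have hBC : p.entropy (fun ω => ((B ω, B' ω), C ω)) = p.entropy (fun ω => (B' ω, B ω, C ω)) :=
    entropy_comp_of_injective p (fun ω => (B' ω, B ω, C ω)) (f := fun t => ((t.2.1, t.1), t.2.2))
      fun _ _ h => by simp_all [Prod.ext_iff]
  have hABC : p.entropy (fun ω => (A ω, (B ω, B' ω), C ω))
      = p.entropy (fun ω => (A ω, B' ω, B ω, C ω)) :=
    entropy_comp_of_injective p (fun ω => (A ω, B' ω, B ω, C ω))
      (f := fun t => (t.1, (t.2.2.1, t.2.1), t.2.2.2))
      fun _ _ h => by simp_all [Prod.ext_iff]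
  simp only [condMutualInfo, hBC, hABC]
  ring

lemma condMutualInfo_pair_left (A : Ω → α) (A' : Ω → α') (B : Ω → β) (C : Ω → γ) :
    p.condMutualInfo (fun ω => (A ω, A' ω)) B C
      = p.condMutualInfo A B C + p.condMutualInfo A' B (fun ω => (A ω, C ω)) := by
  rw [condMutualInfo_comm, condMutualInfo_pair_right, condMutualInfo_comm p B,
    condMutualInfo_comm p B]

lemma condMutualInfo_pair_left' (A : Ω → α) (A' : Ω → α') (B : Ω → β) (C : Ω → γ) :
    p.condMutualInfo (fun ω => (A ω, A' ω)) B C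
      = p.condMutualInfo A' B C + p.condMutualInfo A B (fun ω => (A' ω, C ω)) := by
  rw [← condMutualInfo_pair_left,
    ← condMutualInfo_comp_left_of_injective p _ B C Prod.swap_injective]
  rfl

variable {p}

lemma Indep.symm {A : Ω → α} {B : Ω → β} (h : p.Indep A B) : p.Indep B A := fun b a => by
  rw [probEvent_congr p fun ω => and_comm, h a b, mul_comm]

lemma Indep.comp {A : Ω → α} {B : Ω → β} (h : p.Indep A B) (f : β → γ) :
    p.Indep A (fun ω => f (B ω)) := by
  intro a c
  have hc : p.probVal (fun ω => f (B ω)) c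
      = ∑ b ∈ (Finset.univ.image B).filter (f · = c), p.probVal B b := by
    simpa [probVal] using probEvent_and_comp_eq_sum p (fun _ => True) B f c
  rw [probEvent_and_comp_eq_sum p (fun ω => A ω = a), hc, Finset.mul_sum]
  exact Finset.sum_congr rfl fun b _ => h a b

lemma Indep.entropy_pair {A : Ω → α} {B : Ω → β} (h : p.Indep A B) :
    p.entropy (fun ω => (A ω, B ω)) = p.entropy A + p.entropy B := by
  have hval : ∀ a b, p.probVal (fun ω => (A ω, B ω)) (a, b) = p.probVal A a * p.probVal B b :=
    fun a b => (probEvent_congr p fun ω => Prod.mk.injEq _ _ _ _ ▸ Iff.rfl).trans (h a b)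
  rw [entropy_eq_sum_of_forall_mem p (s := Finset.univ.image A ×ˢ Finset.univ.image B)
    fun ω => Finset.mem_product.2 ⟨Finset.mem_image_of_mem _ (Finset.mem_univ ω),
      Finset.mem_image_of_mem _ (Finset.mem_univ ω)⟩, Finset.sum_product]
  simp only [hval, Real.neg_mul_logb_mul, Finset.sum_add_distrib, ← Finset.sum_mul,
    ← Finset.mul_sum, sum_probVal]
  simp [entropy]

lemma condMutualInfo_pair_cond_of_indep {A : Ω → α} {B : Ω → β} {C : Ω → γ} {D : Ω → δ}
    (h : p.Indep D (fun ω => (A ω, B ω, C ω))) :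
    p.condMutualInfo A B (fun ω => (C ω, D ω)) = p.condMutualInfo A B C := by
  have hAC : p.entropy (fun ω => ((A ω, C ω), D ω))
      = p.entropy (fun ω => (A ω, C ω)) + p.entropy D :=
    (h.comp fun t => (t.1, t.2.2)).symm.entropy_pair
  have hBC : p.entropy (fun ω => ((B ω, C ω), D ω))
      = p.entropy (fun ω => (B ω, C ω)) + p.entropy D :=
    (h.comp fun t => t.2).symm.entropy_pair
  have hABC : p.entropy (fun ω => ((A ω, B ω, C ω), D ω))
      = p.entropy (fun ω => (A ω, B ω, C ω)) + p.entropy D :=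
    h.symm.entropy_pair
  have hC : p.entropy (fun ω => (C ω, D ω)) = p.entropy C + p.entropy D :=
    (h.comp fun t => t.2.2).symm.entropy_pair
  rw [← entropy_comp_of_injective p _ (f := fun t => (t.1.1, t.1.2, t.2))
    (fun _ _ h => by simp_all [Prod.ext_iff])] at hAC hBC
  rw [← entropy_comp_of_injective p _ (f := fun t => (t.1.1, t.1.2.1, t.1.2.2, t.2))
    (fun _ _ h => by simp_all [Prod.ext_iff])] at hABC
  simp only [condMutualInfo, hAC, hBC, hABC, hC]
  ring

lemma condMutualInfo_pair_pair_of_markov {X : Ω → α} {Y : Ω → β} {M : Ω → γ} {N : Ω → δ}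
    {R : Ω → γ'} (hYM : p.condMutualInfo Y M (fun ω => (X ω, R ω)) = 0)
    (hXN : p.condMutualInfo X N (fun ω => (Y ω, M ω, R ω)) = 0)
    (hMN : p.condMutualInfo M N (fun ω => (Y ω, R ω)) = 0) :
    p.condMutualInfo (fun ω => (X ω, Y ω)) (fun ω => (M ω, N ω)) R
      = p.condMutualInfo X M R + p.condMutualInfo Y N R - p.condMutualInfo M N R := by
  have hXYM : p.condMutualInfo (fun ω => (X ω, Y ω)) M R = p.condMutualInfo X M R := by
    rw [condMutualInfo_pair_left, hYM, add_zero]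
  have hXYN : p.condMutualInfo (fun ω => (X ω, Y ω)) N (fun ω => (M ω, R ω))
      = p.condMutualInfo Y N (fun ω => (M ω, R ω)) := by
    rw [condMutualInfo_pair_left', hXN, add_zero]
  have hYN : p.condMutualInfo Y N (fun ω => (M ω, R ω))
      = p.condMutualInfo Y N R - p.condMutualInfo M N R := by
    have hMY := condMutualInfo_pair_left p M Y N R
    rw [condMutualInfo_pair_left', hMN, add_zero] at hMY
    linarith
  rw [condMutualInfo_pair_right, hXYM, hXYN, hYN]
  ring

end FinDist

theorem il_chain_identity_general (Ω 𝒳 𝒴 𝒜 ℬ ℛ₁ ℛ₂ : Type)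
    [Fintype Ω]
    (μ : FinDist Ω)
    (Xv : Ω → 𝒳) (Yv : Ω → 𝒴) (MAv : Ω → 𝒜) (MBv : Ω → ℬ) (RACv : Ω → ℛ₁) (RBCv : Ω → ℛ₂)
    (hindep1 : FinDist.Indep μ RBCv (fun ω => (Xv ω, MAv ω, RACv ω)))
    (hindep2 : FinDist.Indep μ RACv (fun ω => (Yv ω, MBv ω, RBCv ω)))
    (hmarkov1 : FinDist.condMutualInfo μ Yv MAv (fun ω => (Xv ω, RACv ω, RBCv ω)) = 0)
    (hmarkov2 : FinDist.condMutualInfo μ Xv MBv (fun ω => (Yv ω, MAv ω, RACv ω, RBCv ω)) = 0)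
    (hmarkov3 : FinDist.condMutualInfo μ MAv MBv (fun ω => (Yv ω, RACv ω, RBCv ω)) = 0) :
    FinDist.condMutualInfo μ (fun ω => (Xv ω, Yv ω)) (fun ω => (MAv ω, MBv ω))
        (fun ω => (RACv ω, RBCv ω))
      = FinDist.condMutualInfo μ Xv MAv RACv + FinDist.condMutualInfo μ Yv MBv RBCv
        - FinDist.condMutualInfo μ MAv MBv (fun ω => (RACv ω, RBCv ω)) := by
  have hX : μ.condMutualInfo Xv MAv RACv = μ.condMutualInfo Xv MAv (fun ω => (RACv ω, RBCv ω)) :=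
    (FinDist.condMutualInfo_pair_cond_of_indep hindep1).symm
  have hY : μ.condMutualInfo Yv MBv RBCv = μ.condMutualInfo Yv MBv (fun ω => (RACv ω, RBCv ω)) := by
    rw [← FinDist.condMutualInfo_pair_cond_of_indep hindep2,
      ← FinDist.condMutualInfo_comp_cond_of_injective μ Yv MBv _ Prod.swap_injective]
    rfl
  rw [hX, hY]
  exact FinDist.condMutualInfo_pair_pair_of_markov hmarkov1 hmarkov2 hmarkov3

/-- Chain-rule identity for the information leakage of SMP-type
random variables. -/
theorem il_chain_identity (Ω 𝒳 𝒴 𝒜 ℬ ℛ₁ ℛ₂ : Type)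
    [Fintype Ω] [Fintype 𝒳] [Fintype 𝒴] [Fintype 𝒜] [Fintype ℬ] [Fintype ℛ₁] [Fintype ℛ₂]
    (μ : FinDist Ω)
    (Xv : Ω → 𝒳) (Yv : Ω → 𝒴) (MAv : Ω → 𝒜) (MBv : Ω → ℬ) (RACv : Ω → ℛ₁) (RBCv : Ω → ℛ₂)
    (hindep1 : FinDist.Indep μ RBCv (fun ω => (Xv ω, MAv ω, RACv ω)))
    (hindep2 : FinDist.Indep μ RACv (fun ω => (Yv ω, MBv ω, RBCv ω)))
    (hmarkov1 : FinDist.condMutualInfo μ Yv MAv (fun ω => (Xv ω, RACv ω, RBCv ω)) = 0)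
    (hmarkov2 : FinDist.condMutualInfo μ Xv MBv (fun ω => (Yv ω, MAv ω, RACv ω, RBCv ω)) = 0)
    (hmarkov3 : FinDist.condMutualInfo μ MAv MBv (fun ω => (Yv ω, RACv ω, RBCv ω)) = 0) :
    FinDist.condMutualInfo μ (fun ω => (Xv ω, Yv ω)) (fun ω => (MAv ω, MBv ω))
        (fun ω => (RACv ω, RBCv ω))
      = FinDist.condMutualInfo μ Xv MAv RACv + FinDist.condMutualInfo μ Yv MBv RBCv
        - FinDist.condMutualInfo μ MAv MBv (fun ω => (RACv ω, RBCv ω)) :=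
  il_chain_identity_general Ω 𝒳 𝒴 𝒜 ℬ ℛ₁ ℛ₂ μ Xv Yv MAv MBv RACv RBCv hindep1 hindep2 hmarkov1
    hmarkov2 hmarkov3
end
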